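/- Let M be a conditional oriented matroid on I and let B, B' be two basic sets for the same flat F ∈ L(M). Then the difference ∏_{b∈B} z_b − ∏_{b'∈B'} z_{b'} lies in the vanishing ideal I(Z_M) of the big locus, and being homogeneous (since #B = #B'), it lies in gr I(Z_M). -/

import Mathlib

/-- The composition `X ∘ Y` of signed subsets of `I`. -/
def scomp {I : Type*} (X Y : I → SignType) : I → SignType :=
  fun i => if X i ≠ 0 then X i else Y i

/-- The separating set of two signed subsets. -/
def sepSet {I : Type*} (X Y : I → SignType) : Set I :=
  {i | X i = -(Y i) ∧ X i ≠ 0}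

/-- A conditional oriented matroid on the ground set `I`. -/
structure IsCOM {I : Type*} (M : Set (I → SignType)) : Prop where
  faceSym : ∀ X ∈ M, ∀ Y ∈ M, scomp X (-Y) ∈ M
  strongElim : ∀ X ∈ M, ∀ Y ∈ M, ∀ i ∈ sepSet X Y,
    ∃ Z ∈ M, Z i = 0 ∧ ∀ j ∉ sepSet X Y, Z j = scomp X Y j

/-- The flat (zero set) of a covector. -/
def sflat {I : Type*} (X : I → SignType) : Set I := {i | X i = 0}

/-- The collection of flats of a conditional oriented matroid. -/
def flats {I : Type*} (M : Set (I → SignType)) : Set (Set I) :=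
  {F | ∃ X ∈ M, sflat X = F}

/-- `F` is the minimal flat of `M` containing `C` (the closure `C̄` of `C`). -/
def minimalFlatOf {I : Type*} (M : Set (I → SignType)) (C F : Set I) : Prop :=
  F ∈ flats M ∧ C ⊆ F ∧ ∀ F' ∈ flats M, C ⊆ F' → F ⊆ F'

/-- `B` is basic for the flat `F`: the closure of `B` is `F` and no proper
subset of `B` has closure `F`. -/
def IsBasic {I : Type*} (M : Set (I → SignType)) (B : Finset I) (F : Set I) : Prop :=
  minimalFlatOf M (B : Set I) F ∧
    ∀ B' ⊆ B, minimalFlatOf M (B' : Set I) F → B' = B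

/-- The 0/1 point `z_X ∈ K^{I × {+,-,0}}` attached to a covector `X`. -/
def bigPoint (K : Type*) [Field K] {I : Type*} (X : I → SignType) :
    I × SignType → K :=
  fun p => if X p.1 = p.2 then 1 else 0

/-- The big locus `Z_M ⊆ K^{I × {+,-,0}}` of a conditional oriented matroid. -/
def bigLocus (K : Type*) [Field K] {I : Type*} (M : Set (I → SignType)) :
    Set (I × SignType → K) :=
  (fun X => bigPoint K X) '' M

/-- The vanishing ideal of a set of points of `K^σ`. -/
noncomputable def vanishingIdeal (K : Type*) [Field K] {σ : Type*} (Z : Set (σ → K)) :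
    Ideal (MvPolynomial σ K) :=
  ⨅ z ∈ Z, RingHom.ker (MvPolynomial.eval z)

/-- The associated graded ideal `gr I(Z)`, generated by the top-degree
homogeneous components of the nonzero elements of `I(Z)`. -/
noncomputable def grIdeal (K : Type*) [Field K] {σ : Type*} (Z : Set (σ → K)) :
    Ideal (MvPolynomial σ K) :=
  Ideal.span {g | ∃ f ∈ vanishingIdeal K Z, f ≠ 0 ∧
    g = MvPolynomial.homogeneousComponent f.totalDegree f}


/-!
Evaluated at the point `z_X` of a covector `X`, the monomial `∏_{b ∈ B} z_b` is the indicator of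
`B ⊆ X⁰`, and since `X⁰` is a flat this happens exactly when the closure `F` of `B` lies in `X⁰`.
Hence the two monomials agree on `Z_M`. They have the same degree because basic sets of a flat
are equicardinal: inside the flat `X₀⁰` of a covector `X₀`, strong elimination (after making two
covectors opposite at one element with face symmetry) yields the exchange property of the closure,
and the Steinitz exchange argument then applies. A homogeneous element of `I(Z_M)` is its own top
component, so it lies in `gr I(Z_M)`.
-/

section SignedSets

variable {I : Type*}

lemma scomp_eq_zero_iff {X Y : I → SignType} {i : I} :
    scomp X Y i = 0 ↔ X i = 0 ∧ Y i = 0 := by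
  unfold scomp
  split_ifs with h <;> simp_all

lemma scomp_of_eq_zero {X Y : I → SignType} {i : I} (h : X i = 0) : scomp X Y i = Y i := by
  simp [scomp, h]

lemma scomp_of_ne_zero {X Y : I → SignType} {i : I} (h : X i ≠ 0) : scomp X Y i = X i := by
  simp [scomp, h]

lemma SignType.eq_neg_of_ne_of_ne_zero :
    ∀ {x y : SignType}, x ≠ 0 → y ≠ 0 → y ≠ x → y = -x := by
  decide

end SignedSets

namespace IsCOM

variable {I : Type*} {M : Set (I → SignType)}

lemma exists_eq_zero_of_eq_neg (hM : IsCOM M) {X Y : I → SignType} (hX : X ∈ M) (hY : Y ∈ M)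
    {c : I} (hXc : X c ≠ 0) (hYc : Y c = -X c) :
    ∃ Z ∈ M, Z c = 0 ∧ ∀ j, X j = 0 → Z j = Y j := by
  have hc : c ∈ sepSet X Y := ⟨by rw [hYc, neg_neg], hXc⟩
  obtain ⟨Z, hZ, hZc, hZsep⟩ := hM.strongElim X hX Y hY c hc
  exact ⟨Z, hZ, hZc, fun j hXj => (hZsep j fun h => h.2 hXj).trans (scomp_of_eq_zero hXj)⟩

lemma exists_eq_neg_at (hM : IsCOM M) {X₀ X Y : I → SignType} (hX₀ : X₀ ∈ M) (hX : X ∈ M)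
    (hY : Y ∈ M) {c : I} (hX₀c : X₀ c = 0) (hXc : X c ≠ 0) :
    ∃ Y' ∈ M, Y' c = -X c ∧ ∀ j, X₀ j = 0 → (Y' j = 0 ↔ Y j = 0 ∧ X j = 0) := by
  by_cases hYc : Y c = X c
  · -- `X₀ ∘ (-Y)` is `-Y` on the zero set of `X₀`, hence opposite to `X` at `c`
    refine ⟨scomp (scomp X₀ (-Y)) (-X), hM.faceSym _ (hM.faceSym X₀ hX₀ Y hY) X hX, ?_, ?_⟩
    · rw [scomp_of_ne_zero] <;> simp [scomp_of_eq_zero hX₀c, hYc, hXc]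
    · intro j hX₀j
      simp [scomp_eq_zero_iff, scomp_of_eq_zero hX₀j]
  · refine ⟨scomp Y (-X), hM.faceSym Y hY X hX, ?_, fun j _ => by simp [scomp_eq_zero_iff]⟩
    by_cases hY0 : Y c = 0
    · simp [scomp_of_eq_zero hY0]
    · rw [scomp_of_ne_zero hY0, SignType.eq_neg_of_ne_of_ne_zero hXc hY0 hYc]

end IsCOM

section Closure

variable {I : Type*} {M : Set (I → SignType)}

def flatClosure (M : Set (I → SignType)) (S : Set I) : Set I :=
  {x | ∀ G ∈ flats M, S ⊆ G → x ∈ G}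

lemma subset_flatClosure (S : Set I) : S ⊆ flatClosure M S :=
  fun _ hx _ _ hSG => hSG hx

lemma flatClosure_mono {S T : Set I} (h : S ⊆ T) : flatClosure M S ⊆ flatClosure M T :=
  fun _ hx G hG hTG => hx G hG (h.trans hTG)

lemma flatClosure_subset_of_subset_flatClosure {S T : Set I} (h : T ⊆ flatClosure M S) :
    flatClosure M T ⊆ flatClosure M S :=
  fun _ hx G hG hSG => hx G hG fun _ ht => h ht G hG hSG

lemma minimalFlatOf.subset_flatClosure {C F : Set I} (h : minimalFlatOf M C F) :
    F ⊆ flatClosure M C :=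
  fun _ hx G hG hCG => h.2.2 G hG hCG hx

lemma minimalFlatOf.subset_sflat_iff {C F : Set I} (h : minimalFlatOf M C F)
    {X : I → SignType} (hX : X ∈ M) : C ⊆ sflat X ↔ F ⊆ sflat X :=
  ⟨h.2.2 _ ⟨X, hX, rfl⟩, h.2.1.trans⟩

lemma minimalFlatOf.of_subset_of_subset_flatClosure {C C' F : Set I} (h : minimalFlatOf M C F)
    (hC'C : C' ⊆ C) (hCC' : C ⊆ flatClosure M C') : minimalFlatOf M C' F :=
  ⟨h.1, hC'C.trans h.2.1, fun G hG hC'G => h.2.2 G hG fun _ hx => hCC' hx G hG hC'G⟩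

lemma IsCOM.mem_flatClosure_insert_of_mem_flatClosure_insert (hM : IsCOM M)
    {X₀ : I → SignType} (hX₀ : X₀ ∈ M) {A : Set I} {b c : I} (hA : A ⊆ sflat X₀)
    (hb : b ∈ sflat X₀) (hc : c ∈ sflat X₀) (hbc : b ∈ flatClosure M (insert c A))
    (hbA : b ∉ flatClosure M A) : c ∈ flatClosure M (insert b A) := by
  rintro _ ⟨X, hX, rfl⟩ hbAX
  by_contra hXc
  obtain ⟨_, ⟨Y, hY, rfl⟩, hAY, hYb⟩ : ∃ G ∈ flats M, A ⊆ G ∧ b ∉ G := by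
    simpa [flatClosure] using hbA
  obtain ⟨Y', hY', hY'c, hY'0⟩ := hM.exists_eq_neg_at hX₀ hX hY hc hXc
  obtain ⟨Z, hZ, hZc, hZY'⟩ := hM.exists_eq_zero_of_eq_neg hX hY' hXc hY'c
  have hXb : X b = 0 := hbAX (Set.mem_insert b A)
  have hZA : insert c A ⊆ sflat Z := by
    rintro a (rfl | ha)
    · exact hZc
    · have hXa : X a = 0 := hbAX (Set.mem_insert_of_mem b ha)
      show Z a = 0
      rw [hZY' a hXa, hY'0 a (hA ha)]
      exact ⟨hAY ha, hXa⟩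
  have hZb : Z b ≠ 0 := by
    rw [hZY' b hXb, ne_eq, hY'0 b hb]
    exact fun h => hYb h.1
  exact hZb (hbc _ ⟨Z, hZ, rfl⟩ hZA)

end Closure

section Independence

variable {I : Type*} {M : Set (I → SignType)}

def IsFlatIndep (M : Set (I → SignType)) (S : Set I) : Prop :=
  ∀ s ∈ S, s ∉ flatClosure M (S \ {s})

lemma IsFlatIndep.mono {S T : Set I} (hT : IsFlatIndep M T) (hST : S ⊆ T) : IsFlatIndep M S :=
  fun s hs hcl => hT s (hST hs) (flatClosure_mono (Set.sdiff_subset_sdiff_left hST) hcl)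

lemma IsFlatIndep.insert_of_notMem_flatClosure (hM : IsCOM M) {X₀ : I → SignType}
    (hX₀ : X₀ ∈ M) {A : Set I} {t : I} (hA : IsFlatIndep M A) (hAX₀ : insert t A ⊆ sflat X₀) (ht : t ∉ flatClosure M A) :
    IsFlatIndep M (insert t A) := by
  rintro s (rfl | hsA) hcl
  · exact ht (flatClosure_mono (by simp) hcl)
  · have hst : s ≠ t := by rintro rfl; exact ht (subset_flatClosure A hsA)
    rw [← Set.insert_sdiff_singleton_comm hst.symm] at hcl
    have hexch := hM.mem_flatClosure_insert_of_mem_flatClosure_insert hX₀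
      (Set.sdiff_subset.trans ((Set.subset_insert t A).trans hAX₀))
      (hAX₀ (Set.mem_insert_of_mem t hsA)) (hAX₀ (Set.mem_insert t A)) hcl (hA s hsA)
    rw [Set.insert_sdiff_singleton, Set.insert_eq_of_mem hsA] at hexch
    exact ht hexch

lemma IsBasic.isFlatIndep {B : Finset I} {F : Set I} (hB : IsBasic M B F) :
    IsFlatIndep M B := by
  classical
  intro s hs hcl
  have hmin : minimalFlatOf M ↑(B.erase s) F := by
    refine hB.1.of_subset_of_subset_flatClosure (by simp) fun x hx => ?_
    rw [Finset.coe_erase]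
    by_cases hxs : x = s
    · exact hxs ▸ hcl
    · exact subset_flatClosure _ ⟨hx, hxs⟩
  exact Finset.erase_ne_self.mpr hs (hB.2 _ (Finset.erase_subset s B) hmin)

theorem IsFlatIndep.card_le_of_subset_flatClosure [DecidableEq I] (hM : IsCOM M)
    {X₀ : I → SignType} (hX₀ : X₀ ∈ M) {S T : Finset I} (hS : IsFlatIndep M S)
    (hSX₀ : ↑S ⊆ sflat X₀) (hTX₀ : ↑T ⊆ sflat X₀) (hST : ↑S ⊆ flatClosure M T) :
    S.card ≤ T.card := by
  by_cases hsub : S ⊆ T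
  · exact Finset.card_le_card hsub
  obtain ⟨s, hsS, hsT⟩ := Finset.not_subset.mp hsub
  have hSs : (↑(S.erase s) : Set I) ⊆ ↑S := Finset.coe_subset.mpr (Finset.erase_subset s S)
  have hs : s ∉ flatClosure M ↑(S.erase s) := by
    rw [Finset.coe_erase]; exact hS s hsS
  -- trade `s` for an element of `T` outside the closure of the rest of `S`
  obtain ⟨t, htT, ht⟩ : ∃ t ∈ T, t ∉ flatClosure M ↑(S.erase s) := by
    by_contra! h
    exact hs (flatClosure_subset_of_subset_flatClosure h (hST hsS))
  have htS : t ∉ S.erase s := fun h => ht (subset_flatClosure _ h)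
  have hS'X₀ : ↑(insert t (S.erase s)) ⊆ sflat X₀ := by
    rw [Finset.coe_insert, Set.insert_subset_iff]
    exact ⟨hTX₀ htT, hSs.trans hSX₀⟩
  have hS' : IsFlatIndep M ↑(insert t (S.erase s)) := by
    rw [Finset.coe_insert] at hS'X₀ ⊢
    exact (hS.mono hSs).insert_of_notMem_flatClosure hM hX₀ hS'X₀ ht
  have hS'T : ↑(insert t (S.erase s)) ⊆ flatClosure M T := by
    rw [Finset.coe_insert, Set.insert_subset_iff]
    exact ⟨subset_flatClosure _ htT, hSs.trans hST⟩
  have hcard : (insert t (S.erase s)).card = S.card := by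
    rw [Finset.card_insert_of_notMem htS, Finset.card_erase_add_one hsS]
  have : (insert t (S.erase s) \ T).card < (S \ T).card := by
    rw [Finset.insert_sdiff_of_mem _ htT, Finset.erase_sdiff_comm]
    exact Finset.card_erase_lt_of_mem (Finset.mem_sdiff.mpr ⟨hsS, hsT⟩)
  exact hcard ▸ card_le_of_subset_flatClosure hM hX₀ hS' hS'X₀ hTX₀ hS'T
termination_by (S \ T).card

lemma IsBasic.card_le (hM : IsCOM M) {B B' : Finset I} {F : Set I}
    (hB : IsBasic M B F) (hB' : minimalFlatOf M (B' : Set I) F) : B.card ≤ B'.card := by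
  classical
  obtain ⟨X₀, hX₀, rfl⟩ := hB.1.1
  exact hB.isFlatIndep.card_le_of_subset_flatClosure hM hX₀ hB.1.2.1 hB'.2.1
    (hB.1.2.1.trans hB'.subset_flatClosure)

lemma IsBasic.card_eq (hM : IsCOM M) {B B' : Finset I} {F : Set I} (hB : IsBasic M B F)
    (hB' : IsBasic M B' F) : B.card = B'.card :=
  le_antisymm (hB.card_le hM hB'.1) (hB'.card_le hM hB.1)

end Independence

section Ideals

lemma isHomogeneous_prod_X {R σ ι : Type*} [CommSemiring R] (s : Finset ι) (g : ι → σ) :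
    (∏ i ∈ s, MvPolynomial.X (g i) : MvPolynomial σ R).IsHomogeneous s.card := by
  simpa using MvPolynomial.IsHomogeneous.prod s _ (fun _ => 1)
    fun i _ => MvPolynomial.isHomogeneous_X R (g i)

variable {K : Type*} [Field K]

lemma mem_vanishingIdeal_iff {σ : Type*} {Z : Set (σ → K)} {f : MvPolynomial σ K} :
    f ∈ vanishingIdeal K Z ↔ ∀ z ∈ Z, MvPolynomial.eval z f = 0 := by
  simp [vanishingIdeal]

lemma mem_grIdeal_of_isHomogeneous {σ : Type*} {Z : Set (σ → K)} {f : MvPolynomial σ K} {n : ℕ}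
    (hf : f ∈ vanishingIdeal K Z) (hn : f.IsHomogeneous n) : f ∈ grIdeal K Z := by
  rcases eq_or_ne f 0 with rfl | hf0
  · exact Ideal.zero_mem _
  · refine Ideal.subset_span ⟨f, hf, hf0, ?_⟩
    rw [hn.totalDegree hf0, MvPolynomial.homogeneousComponent_eq_self hn]

lemma eval_bigPoint_prod_X_zero {I : Type*} (X : I → SignType) (C : Finset I) :
    MvPolynomial.eval (bigPoint K X) (∏ b ∈ C, MvPolynomial.X (b, (0 : SignType)))
      = if ∀ b ∈ C, X b = 0 then 1 else 0 := by
  simp [bigPoint, Finset.prod_boole]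

lemma prod_X_zero_sub_prod_X_zero_mem_vanishingIdeal {I : Type*} {M : Set (I → SignType)}
    {B B' : Finset I} (h : ∀ X ∈ M, (B : Set I) ⊆ sflat X ↔ (B' : Set I) ⊆ sflat X) :
    (∏ b ∈ B, MvPolynomial.X (b, (0 : SignType))) - (∏ b ∈ B', MvPolynomial.X (b, (0 : SignType)))
      ∈ vanishingIdeal K (bigLocus K M) := by
  rw [mem_vanishingIdeal_iff]
  rintro _ ⟨X, hX, rfl⟩
  have hX := h X hX
  simp only [Set.subset_def, Finset.mem_coe, sflat, Set.mem_ofPred_eq] at hX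
  simp only [map_sub, eval_bigPoint_prod_X_zero, hX, sub_self]

end Ideals

/-- if `B` and `B'` are two basic sets for the same flat `F`,
then `∏_{b∈B} z_b − ∏_{b'∈B'} z_{b'}` lies in the vanishing ideal `I(Z_M)` of
the big locus, and (being homogeneous, since `#B = #B'`) it also lies in
`gr I(Z_M)`. -/
theorem basic_difference_in_gr (K : Type*) [Field K] {I : Type*}
    {M : Set (I → SignType)} (hM : IsCOM M)
    (B B' : Finset I) (F : Set I)
    (hB : IsBasic M B F) (hB' : IsBasic M B' F) :
    ((∏ b ∈ B, MvPolynomial.X (b, (0 : SignType)))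
        - (∏ b ∈ B', MvPolynomial.X (b, (0 : SignType)))
      ∈ vanishingIdeal K (bigLocus K M)) ∧
    ((∏ b ∈ B, MvPolynomial.X (b, (0 : SignType)))
        - (∏ b ∈ B', MvPolynomial.X (b, (0 : SignType)))
      ∈ grIdeal K (bigLocus K M)) := by
  have hvan := prod_X_zero_sub_prod_X_zero_mem_vanishingIdeal (K := K) fun X hX =>
    (hB.1.subset_sflat_iff hX).trans (hB'.1.subset_sflat_iff hX).symm
  refine ⟨hvan, mem_grIdeal_of_isHomogeneous hvan ((isHomogeneous_prod_X B _).sub ?_)⟩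
  rw [hB.card_eq hM hB']
  exact isHomogeneous_prod_X B' _
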